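/- arXiv:2004.05803 — 7 statements merged into one kernel-verified Lean document; each statement's English description precedes it below -/
import Mathlib

section
/- Let X be a measurable space, x_obs ∈ X with {x_obs} measurable, and let (μ_ψ)_{ψ ∈ ℝ^k} be a family of probability measures on X with μ_ψ({x_obs}) = 0 for every ψ ∈ ℝ^k. Let a : [0,1] → ℝ be strictly increasing and b : [0,1] → ℝ be strictly decreasing. Define F : ℝ^k → ℝ by F(ψ) = sup over measurable d : X → [0,1] of [ a(d(x_obs)) + ∫ b(d(x)) dμ_ψ(x) ]. Then F(ψ) = a(1) + b(0) for every ψ; in particular F is constant, so its Fréchet derivative (gradient with respect to ψ) is zero at every ψ. -/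
/-!
The discriminator `1_{x_obs}` maximises both terms of the objective at once: `a (d x_obs) ≤ a 1`
and, since `μ ψ {x_obs} = 0`, it is `μ ψ`-a.e. `0`, so `∫ b ∘ d ∂(μ ψ) ≤ b 0` is attained.
Hence the supremum is `a 1 + b 0` whatever `ψ` is.
-/

open MeasureTheory Set

theorem AntitoneOn.measurable_comp {X β γ : Type*} [MeasurableSpace X]
    [LinearOrder β] [TopologicalSpace β] [OrderClosedTopology β] [MeasurableSpace β]
    [BorelSpace β]
    [LinearOrder γ] [TopologicalSpace γ] [OrderTopology γ] [MeasurableSpace γ] [BorelSpace γ]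
    [SecondCountableTopology γ]
    {f : β → γ} {s : Set β} (hf : AntitoneOn f s) {d : X → β} (hd : Measurable d)
    (hds : ∀ x, d x ∈ s) : Measurable fun x ↦ f (d x) :=
  have hfs : Antitone (s.domRestrict f) := fun _ _ h ↦ hf (Subtype.prop _) (Subtype.prop _) h
  hfs.measurable.comp (hd.subtype_mk (h := hds))

theorem integral_comp_le_of_antitoneOn {X : Type*} [MeasurableSpace X] {μ : Measure X}
    [IsProbabilityMeasure μ] {f : ℝ → ℝ} {p q : ℝ} (hf : AntitoneOn f (Icc p q))
    {d : X → ℝ} (hd : Measurable d) (hdpq : ∀ x, d x ∈ Icc p q) :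
    ∫ x, f (d x) ∂μ ≤ f p := by
  have hbound : ∀ x, f (d x) ∈ Icc (f q) (f p) := fun x ↦
    have hpq : p ≤ q := (hdpq x).1.trans (hdpq x).2
    ⟨hf (hdpq x) ⟨hpq, le_rfl⟩ (hdpq x).2, hf ⟨le_rfl, hpq⟩ (hdpq x) (hdpq x).1⟩
  have hint : Integrable (fun x ↦ f (d x)) μ :=
    .of_mem_Icc _ _ (hf.measurable_comp hd hdpq).aemeasurable (.of_forall hbound)
  calc ∫ x, f (d x) ∂μ ≤ ∫ _, f p ∂μ :=
        integral_mono hint (integrable_const _) fun x ↦ (hbound x).2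
    _ = f p := by simp

def discriminatorValues {X : Type*} [MeasurableSpace X] (μ : Measure X) (x₀ : X) (a b : ℝ → ℝ) :
    Set ℝ :=
  {v | ∃ d : X → ℝ, Measurable d ∧ (∀ x, d x ∈ Icc (0 : ℝ) 1) ∧ v = a (d x₀) + ∫ x, b (d x) ∂μ}

section Discriminator

variable {X : Type*} [MeasurableSpace X] {μ : Measure X} [IsProbabilityMeasure μ] {x₀ : X}
  {a b : ℝ → ℝ}

theorem mem_upperBounds_discriminatorValues (ha : MonotoneOn a (Icc 0 1))
    (hb : AntitoneOn b (Icc 0 1)) :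
    a 1 + b 0 ∈ upperBounds (discriminatorValues μ x₀ a b) := by
  rintro v ⟨d, hd, hd01, rfl⟩
  have hobs : a (d x₀) ≤ a 1 := ha (hd01 x₀) (right_mem_Icc.2 zero_le_one) (hd01 x₀).2
  linarith [integral_comp_le_of_antitoneOn (μ := μ) hb hd hd01]

theorem indicator_mem_discriminatorValues (hx₀ : MeasurableSet {x₀}) (hμx₀ : μ {x₀} = 0) :
    a 1 + b 0 ∈ discriminatorValues μ x₀ a b := by
  refine ⟨indicator {x₀} 1, measurable_const.indicator hx₀, fun x ↦ ?_, ?_⟩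
  · by_cases hx : x = x₀ <;> simp [hx]
  · have hae : (fun x ↦ b (indicator {x₀} 1 x)) =ᵐ[μ] fun _ ↦ b 0 := by
      filter_upwards [measure_eq_zero_iff_ae_notMem.mp hμx₀] with x hx
      rw [indicator_of_notMem hx]
    simp [integral_congr_ae hae]

theorem sSup_discriminatorValues (ha : MonotoneOn a (Icc 0 1)) (hb : AntitoneOn b (Icc 0 1))
    (hx₀ : MeasurableSet {x₀}) (hμx₀ : μ {x₀} = 0) :
    sSup (discriminatorValues μ x₀ a b) = a 1 + b 0 :=
  IsGreatest.csSup_eq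
    ⟨indicator_mem_discriminatorValues hx₀ hμx₀, mem_upperBounds_discriminatorValues ha hb⟩

end Discriminator

/-- **Proposition 1 (i): gradient zero on optimal discriminator.** With a single real
observation `x_obs` and a family of generator distributions `μ ψ` indexed by the proposal
parameter `ψ ∈ ℝ^k`, the optimal-discriminator value
`F ψ = sup_d [a (d x_obs) + ∫ b (d x) ∂(μ ψ)]` is the constant `a 1 + b 0`; in particular its
gradient (Fréchet derivative) with respect to `ψ` vanishes everywhere. -/
theorem optimal_discriminator_value_constant_gradient_zero
    {X : Type*} [MeasurableSpace X] {k : ℕ} (x_obs : X)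
    (hx : MeasurableSet ({x_obs} : Set X))
    (μ : EuclideanSpace ℝ (Fin k) → Measure X)
    (hμp : ∀ ψ, IsProbabilityMeasure (μ ψ))
    (hμ0 : ∀ ψ, μ ψ {x_obs} = 0)
    (a b : ℝ → ℝ)
    (ha : StrictMonoOn a (Set.Icc 0 1)) (hb : StrictAntiOn b (Set.Icc 0 1))
    (F : EuclideanSpace ℝ (Fin k) → ℝ)
    (hF : ∀ ψ, F ψ = sSup {v : ℝ | ∃ d : X → ℝ, Measurable d ∧
      (∀ x, d x ∈ Set.Icc (0 : ℝ) 1) ∧ v = a (d x_obs) + ∫ x, b (d x) ∂(μ ψ)}) :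
    (∀ ψ, F ψ = a 1 + b 0) ∧ (∀ ψ, fderiv ℝ F ψ = 0) := by
  have hconst : ∀ ψ, F ψ = a 1 + b 0 := fun ψ ↦ by
    have := hμp ψ
    exact (hF ψ).trans
      (sSup_discriminatorValues ha.monotoneOn hb.antitoneOn hx (hμ0 ψ))
  refine ⟨hconst, fun ψ ↦ ?_⟩
  rw [show F = fun _ ↦ a 1 + b 0 from funext hconst, fderiv_fun_const, Pi.zero_apply]
end

section
/- Let X be a measurable space, x_obs ∈ X with {x_obs} measurable, and μ a probability measure on X with μ({x_obs}) = 0. Let a : [0,1] → EReal be strictly increasing with a(1) = +∞ (a is not upper bounded by a real number) and b : [0,1] → EReal be strictly decreasing with b(0) = +∞ (b is not upper bounded by a real number), and assume a(t) > −∞ for t > 0 and b(t) > −∞ for t < 1. Then for every real C there exists a measurable function d : X → [0,1] such that a(d(x_obs)) + ∫ b(d(x)) dμ(x) ≥ C; that is, the supremum over discriminators of the empirical value function is +∞. -/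
open MeasureTheory

/-- The positive part of an extended real number, as an extended nonnegative real. -/
noncomputable def EReal.posPart (x : EReal) : ENNReal :=
  if x = ⊤ then ⊤ else ENNReal.ofReal x.toReal

/-- The (signed) integral of an `EReal`-valued function: the difference of the lower
integrals of its positive and negative parts, computed in `EReal`. -/
noncomputable def erealIntegral {X : Type*} [MeasurableSpace X]
    (μ : Measure X) (f : X → EReal) : EReal :=
  ((∫⁻ x, (f x).posPart ∂μ : ENNReal) : EReal) - ((∫⁻ x, (-f x).posPart ∂μ : ENNReal) : EReal)

/-- **Proposition 1 (ii).** If the score transforms `a` and `b` of the empirical adversarial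
value function are not upper bounded (`a 1 = ⊤` and `b 0 = ⊤`), then the supremum over
discriminators `d : X → [0,1]` of `a (d x_obs) + ∫ b (d x) ∂μ` is `+∞`: for every real `C`
there is a measurable discriminator whose empirical value is at least `C`. -/
theorem empirical_value_attains_infinity
    {X : Type*} [MeasurableSpace X] (x_obs : X)
    (hx : MeasurableSet ({x_obs} : Set X))
    (μ : Measure X) [IsProbabilityMeasure μ] (hμ : μ {x_obs} = 0)
    (a b : ℝ → EReal)
    (ha : StrictMonoOn a (Set.Icc 0 1)) (hb : StrictAntiOn b (Set.Icc 0 1))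
    (ha1 : a 1 = ⊤) (hb0 : b 0 = ⊤)
    (ha' : ∀ t ∈ Set.Ioc (0 : ℝ) 1, ⊥ < a t)
    (hb' : ∀ t ∈ Set.Ico (0 : ℝ) 1, ⊥ < b t) :
    ∀ C : ℝ, ∃ d : X → ℝ, Measurable d ∧ (∀ x, d x ∈ Set.Icc (0 : ℝ) 1) ∧
      (C : EReal) ≤ a (d x_obs) + erealIntegral μ (fun x => b (d x)) := by
  intro C
  refine ⟨Set.indicator {x_obs} (fun _ => (1 : ℝ)), (measurable_const.indicator hx), ?_, ?_⟩
  · intro x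
    by_cases h : x ∈ ({x_obs} : Set X) <;>
      simp [Set.indicator, h]
  · have hd_obs : Set.indicator {x_obs} (fun _ => (1 : ℝ)) x_obs = 1 := by
      simp
    have hN : (∫⁻ x, (-(b (Set.indicator {x_obs} (fun _ => (1 : ℝ)) x))).posPart ∂μ) = 0 := by
      have : (fun x => (-(b (Set.indicator {x_obs} (fun _ => (1 : ℝ)) x))).posPart)
          =ᵐ[μ] (fun _ => (0 : ENNReal)) := by
        refine Filter.eventuallyEq_of_mem (s := {x_obs}ᶜ) ?_ ?_
        · rwa [mem_ae_iff, compl_compl]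
        · intro x hxne
          have : Set.indicator {x_obs} (fun _ => (1 : ℝ)) x = 0 :=
            Set.indicator_of_notMem hxne _
          simp [this, hb0, EReal.posPart]
      rw [lintegral_congr_ae this, lintegral_zero]
    rw [hd_obs, ha1, erealIntegral, hN]
    have h1 : ((0 : ENNReal) : EReal) = 0 := rfl
    rw [h1, sub_zero]
    have h2 : ((∫⁻ x, (b (Set.indicator {x_obs} (fun _ => (1:ℝ)) x)).posPart ∂μ : ENNReal) : EReal) ≠ ⊥ := by
      exact ne_of_gt (lt_of_lt_of_le (by simp) (EReal.coe_ennreal_nonneg _))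
    rw [EReal.top_add_of_ne_bot h2]
    exact le_top
end

section
/- Let Θ ⊂ ℝ^d be a compact measurable set, and let p : ℝ^k × Θ → ℝ, (ψ, θ) ↦ p_ψ(θ), be such that for each θ the map ψ ↦ p_ψ(θ) is differentiable and for each ψ the gradient θ ↦ ∇_ψ p_ψ(θ) is continuous in θ. Let x_obs ∈ ℝ^q, let d* : ℝ^q → [0,1] satisfy d*(x_obs) = 1 and d*(x) = 0 for x ≠ x_obs. Let (U, p_U) be a probability space, g : Θ × U → ℝ^q measurable with g(θ,u) ≠ x_obs for all (θ,u), and b : [0,1] → ℝ strictly decreasing with b(0) = 0 and lim_{t → 0+} b(t) = 0. Fix any ψ. Then for every η > 0 there exists ε₀ > 0 such that for every measurable d_φ : ℝ^q → [0,1] with sup_x |d_φ(x) − d*(x)| < ε₀, the gradient of the value function satisfies ‖∫_Θ ∇_ψ p_ψ(θ) · (∫_U b(d_φ(g(θ,u))) dp_U(u)) dθ‖₂ ≤ η. In other words, the gradient with respect to the proposal parameter ψ converges to zero as the discriminator converges to the optimal discriminator in supremum norm. -/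
open MeasureTheory Set Filter Topology

/-! Off `x_obs` the optimal discriminator vanishes and the generator never reaches `x_obs`, so a
discriminator `ε`-close to `d*` in supremum norm only ever sees values in `[0, ε)` along the
generator. Since `b` is continuous from the right at `0` with `b 0 = 0`, the inner expectation
`E_u[b (dφ (g θ u))]` is then uniformly small on `Θ`, while the gradient of `p` is bounded on the
compact set `Θ`; hence the whole integral is small. -/

theorem continuousWithinAt_Ici_of_tendsto_nhdsGT {b : ℝ → ℝ} (hb0 : b 0 = 0)
    (hb : Tendsto b (𝓝[>] 0) (𝓝 0)) : ContinuousWithinAt b (Ici 0) 0 := by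
  rw [← Ioi_insert, continuousWithinAt_insert_self, ContinuousWithinAt, hb0]
  exact hb

theorem abs_le_ciSup_abs_sub_of_eq_zero {α : Type*} {f g : α → ℝ} {a x : α} {C : ℝ}
    (hf : ∀ y, |f y| ≤ C) (hg : ∀ y, y ≠ a → g y = 0) (hx : x ≠ a) :
    |f x| ≤ ⨆ y, |f y - g y| := by
  have hbdd : BddAbove (range fun y => |f y - g y|) := by
    refine ⟨max C |f a - g a|, ?_⟩
    rintro _ ⟨y, rfl⟩
    rcases eq_or_ne y a with rfl | hy
    · exact le_max_right _ _
    · simpa [hg y hy] using (hf y).trans (le_max_left _ _)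
  simpa [hg x hx] using le_ciSup hbdd x

theorem norm_setIntegral_integral_smul_le {X U E : Type*} [MeasurableSpace X] [MeasurableSpace U]
    [NormedAddCommGroup E] [NormedSpace ℝ E] {ν : Measure X} {s : Set X} (hs : ν s < ⊤)
    {μ : Measure U} [IsProbabilityMeasure μ] {F : X → U → ℝ} {G : X → E} {δ M : ℝ}
    (hF : ∀ x ∈ s, ∀ u, |F x u| ≤ δ) (hG : ∀ x ∈ s, ‖G x‖ ≤ M) :
    ‖∫ x in s, (∫ u, F x u ∂μ) • G x ∂ν‖ ≤ δ * M * ν.real s := by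
  refine norm_setIntegral_le_of_norm_le_const hs fun x hx => ?_
  have hint : ‖∫ u, F x u ∂μ‖ ≤ δ := by
    simpa using norm_integral_le_of_norm_le_const (μ := μ) 
      (Eventually.of_forall fun u => (Real.norm_eq_abs _).trans_le (hF x hx u))
  rw [norm_smul]
  exact mul_le_mul hint (hG x hx) (norm_nonneg _) ((norm_nonneg _).trans hint)

theorem avo_gradient_vanishing_general
    {d k q : ℕ}
    (Θ : Set (EuclideanSpace ℝ (Fin d)))
    (hΘc : IsCompact Θ)
    (p : EuclideanSpace ℝ (Fin k) → EuclideanSpace ℝ (Fin d) → ℝ)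
    (hcont : ∀ ψ : EuclideanSpace ℝ (Fin k),
      ContinuousOn (fun θ => gradient (fun ψ' => p ψ' θ) ψ) Θ)
    (x_obs : EuclideanSpace ℝ (Fin q))
    (dstar : EuclideanSpace ℝ (Fin q) → ℝ)
    (hd0 : ∀ x, x ≠ x_obs → dstar x = 0)
    {U : Type*} [MeasurableSpace U] (pU : Measure U) [IsProbabilityMeasure pU]
    (g : EuclideanSpace ℝ (Fin d) → U → EuclideanSpace ℝ (Fin q))
    (hgne : ∀ θ ∈ Θ, ∀ u, g θ u ≠ x_obs)
    (b : ℝ → ℝ)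
    (hb0 : b 0 = 0)
    (hblim : Filter.Tendsto b (nhdsWithin 0 (Set.Ioi 0)) (nhds 0))
    (ψ : EuclideanSpace ℝ (Fin k)) :
    ∀ η : ℝ, 0 < η → ∃ ε₀ : ℝ, 0 < ε₀ ∧
      ∀ dφ : EuclideanSpace ℝ (Fin q) → ℝ, Measurable dφ →
        (∀ x, dφ x ∈ Set.Icc (0 : ℝ) 1) →
        (⨆ x, |dφ x - dstar x|) < ε₀ →
        ‖∫ θ in Θ, (∫ u, b (dφ (g θ u)) ∂pU) • gradient (fun ψ' => p ψ' θ) ψ‖ ≤ η := by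
  intro η hη
  obtain ⟨M, hM⟩ := hΘc.exists_bound_of_continuousOn (hcont ψ)
  set V := volume.real Θ
  set δ := η / (|M| * V + 1)
  have hδ : 0 < δ := by positivity
  obtain ⟨ε₀, hε₀, hbε⟩ :=
    Metric.continuousWithinAt_iff.1 (continuousWithinAt_Ici_of_tendsto_nhdsGT hb0 hblim) δ hδ
  refine ⟨ε₀, hε₀, fun dφ _ hrange hsup => ?_⟩
  have hb_small : ∀ θ ∈ Θ, ∀ u, |b (dφ (g θ u))| ≤ δ := fun θ hθ u => by
    have hclose : |dφ (g θ u)| ≤ ⨆ x, |dφ x - dstar x| :=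
      abs_le_ciSup_abs_sub_of_eq_zero (C := 1)
        (fun x => (abs_of_nonneg (hrange x).1).trans_le (hrange x).2) hd0 (hgne θ hθ u)
    have := hbε (hrange _).1 (by rw [Real.dist_eq, sub_zero]; linarith)
    rw [Real.dist_eq, hb0, sub_zero] at this
    exact this.le
  calc _ ≤ δ * |M| * V := norm_setIntegral_integral_smul_le hΘc.measure_lt_top hb_small
          fun θ hθ => (hM θ hθ).trans (le_abs_self M)
    _ ≤ δ * (|M| * V + 1) := by rw [mul_assoc]; gcongr; linarith
    _ = η := div_mul_cancel₀ _ (by positivity)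

/-- **Corollary 1: gradient vanishing near the optimal discriminator.** In AVO with a compact
input space `Θ ⊂ ℝ^d`, a proposal density family `p ψ θ` differentiable in `ψ` with gradient
continuous in `θ`, a black-box generator `g` never hitting the observation `x_obs`, and a
strictly decreasing transform `b` with `b 0 = 0` and `b (0+) = 0`, the gradient of the value
function with respect to the proposal parameter `ψ` converges to zero as the discriminator
converges to the optimal discriminator `dstar` in supremum norm:
for every `η > 0` there is `ε₀ > 0` such that every measurable discriminator `dφ : ℝ^q → [0,1]`
with `sup_x |dφ x - dstar x| < ε₀` satisfies
`‖∫_Θ (E_u[b (dφ (g θ u))]) • ∇_ψ p ψ θ dθ‖ ≤ η`. -/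
theorem avo_gradient_vanishing
    {d k q : ℕ}
    (Θ : Set (EuclideanSpace ℝ (Fin d)))
    (hΘc : IsCompact Θ) (hΘm : MeasurableSet Θ)
    (p : EuclideanSpace ℝ (Fin k) → EuclideanSpace ℝ (Fin d) → ℝ)
    (hdiff : ∀ θ ∈ Θ, Differentiable ℝ (fun ψ => p ψ θ))
    (hcont : ∀ ψ : EuclideanSpace ℝ (Fin k),
      ContinuousOn (fun θ => gradient (fun ψ' => p ψ' θ) ψ) Θ)
    (x_obs : EuclideanSpace ℝ (Fin q))
    (dstar : EuclideanSpace ℝ (Fin q) → ℝ)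
    (hd1 : dstar x_obs = 1) (hd0 : ∀ x, x ≠ x_obs → dstar x = 0)
    {U : Type*} [MeasurableSpace U] (pU : Measure U) [IsProbabilityMeasure pU]
    (g : EuclideanSpace ℝ (Fin d) → U → EuclideanSpace ℝ (Fin q))
    (hgm : Measurable (fun z : EuclideanSpace ℝ (Fin d) × U => g z.1 z.2))
    (hgne : ∀ θ ∈ Θ, ∀ u, g θ u ≠ x_obs)
    (b : ℝ → ℝ) (hb : StrictAntiOn b (Set.Icc 0 1))
    (hb0 : b 0 = 0)
    (hblim : Filter.Tendsto b (nhdsWithin 0 (Set.Ioi 0)) (nhds 0))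
    (ψ : EuclideanSpace ℝ (Fin k)) :
    ∀ η : ℝ, 0 < η → ∃ ε₀ : ℝ, 0 < ε₀ ∧
      ∀ dφ : EuclideanSpace ℝ (Fin q) → ℝ, Measurable dφ →
        (∀ x, dφ x ∈ Set.Icc (0 : ℝ) 1) →
        (⨆ x, |dφ x - dstar x|) < ε₀ →
        ‖∫ θ in Θ, (∫ u, b (dφ (g θ u)) ∂pU) • gradient (fun ψ' => p ψ' θ) ψ‖ ≤ η :=
  avo_gradient_vanishing_general Θ hΘc p hcont x_obs dstar hd0 pU g hgne b hb0 hblim ψ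
end

section
/- Let X be a measurable space, x_obs ∈ X with {x_obs} measurable, and let d_φ : X → ℝ be measurable. Let d* : X → ℝ satisfy d*(x_obs) = 1 and d*(x) = 0 for x ≠ x_obs, and suppose sup_{x ∈ X} |d_φ(x) − d*(x)| < 1/2. Let (U, 𝒰, p_U) be a probability space and g : U → X a measurable map (the black-box generator with its input parameter θ fixed), and let Y = d_φ ∘ g : U → ℝ. Then the law of Y (the pushforward measure (d_φ ∘ g)_* p_U) assigns to the point d_φ(x_obs) exactly the probability that the generator reproduces the observation: ((d_φ ∘ g)_* p_U)({d_φ(x_obs)}) = p_U({u ∈ U : g(u) = x_obs}). -/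
open MeasureTheory

/-- **Theorem 1 (point-mass form).** Let `dφ` be a measurable discriminator that is
`1/2`-close in supremum norm (expressed as: there is a bound `ε < 1/2` with
`|dφ x - dstar x| ≤ ε` for all `x`) to the optimal discriminator `dstar` of the empirical
value function with single observation `x_obs`. Then for any black-box generator `g`
(with its input parameter fixed) driven by the nuisance distribution `pU`, the law of the
random variable `Y = dφ ∘ g` assigns to the point `dφ x_obs` exactly the likelihood, i.e. the
probability that the generator reproduces the observation. -/
theorem law_of_discriminator_output_at_obs
    {X : Type*} [MeasurableSpace X] (x_obs : X)
    (hx : MeasurableSet ({x_obs} : Set X))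
    (dφ dstar : X → ℝ) (hdφm : Measurable dφ)
    (h1 : dstar x_obs = 1) (h0 : ∀ x, x ≠ x_obs → dstar x = 0)
    (hclose : ∃ ε : ℝ, ε < 1 / 2 ∧ ∀ x, |dφ x - dstar x| ≤ ε)
    {U : Type*} [MeasurableSpace U] (pU : Measure U) [IsProbabilityMeasure pU]
    (g : U → X) (hg : Measurable g) :
    Measure.map (fun u => dφ (g u)) pU {dφ x_obs} = pU {u : U | g u = x_obs} := by
  obtain ⟨ε, hε, hb⟩ := hclose
  have key : ∀ x : X, dφ x = dφ x_obs ↔ x = x_obs := by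
    intro x
    constructor
    · intro h
      by_contra hne
      have h1' := hb x_obs
      have h2' := hb x
      rw [h1] at h1'
      rw [h0 x hne] at h2'
      rw [h] at h2'
      rw [abs_le] at h1' h2'
      linarith [h1'.1, h2'.2]
    · intro h; rw [h]
  have hm : Measurable (fun u => dφ (g u)) := hdφm.comp hg
  rw [Measure.map_apply hm (measurableSet_singleton _)]
  congr 1
  ext u
  simp [Set.mem_preimage, key (g u)]
end

section
/- Let X be a measurable space, x_obs ∈ X with {x_obs} measurable, and let d_φ : X → [0,1] be measurable. Let d* : X → ℝ satisfy d*(x_obs) = 1 and d*(x) = 0 for x ≠ x_obs, and suppose sup_{x ∈ X} |d_φ(x) − d*(x)| < 1/2. Let (U, 𝒰, p_U) be a probability space and g : U → X a measurable map. Let h : [0,1] → ℝ be strictly monotone (hence injective) and measurable, and set Z = h ∘ d_φ ∘ g : U → ℝ. Then the law of Z assigns to the point h(d_φ(x_obs)) exactly the probability that the generator reproduces the observation: ((h ∘ d_φ ∘ g)_* p_U)({h(d_φ(x_obs))}) = p_U({u ∈ U : g(u) = x_obs}). -/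
open MeasureTheory

/-- **Corollary 2 (point-mass form).** Let `dφ : X → [0,1]` be a measurable discriminator that
is `1/2`-close in supremum norm to the optimal discriminator `dstar` of the empirical value
function with single observation `x_obs`, and let `h : [0,1] → ℝ` be strictly monotone (hence
injective on `[0,1]`) and measurable. Then the law of the transformed random variable
`Z = h ∘ dφ ∘ g` assigns to the point `h (dφ x_obs)` exactly the probability that the
generator `g` reproduces the observation. -/
theorem law_of_transformed_discriminator_output_at_obs
    {X : Type*} [MeasurableSpace X] (x_obs : X)
    (hx : MeasurableSet ({x_obs} : Set X))
    (dφ : X → ℝ) (hdφm : Measurable dφ) (hdφ01 : ∀ x, dφ x ∈ Set.Icc (0 : ℝ) 1)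
    (dstar : X → ℝ)
    (h1 : dstar x_obs = 1) (h0 : ∀ x, x ≠ x_obs → dstar x = 0)
    (hclose : (⨆ x, |dφ x - dstar x|) < 1 / 2)
    {U : Type*} [MeasurableSpace U] (pU : Measure U) [IsProbabilityMeasure pU]
    (g : U → X) (hg : Measurable g)
    (h : ℝ → ℝ) (hmono : StrictMonoOn h (Set.Icc 0 1) ∨ StrictAntiOn h (Set.Icc 0 1))
    (hmeas : Measurable h) :
    Measure.map (fun u => h (dφ (g u))) pU {h (dφ x_obs)} = pU {u : U | g u = x_obs} := by
  have hbdd : BddAbove (Set.range fun x => |dφ x - dstar x|) := by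
    refine ⟨1, ?_⟩
    rintro _ ⟨x, rfl⟩
    dsimp only
    rcases eq_or_ne x x_obs with rfl | hne
    · rw [h1]; rw [abs_sub_comm]
      rw [abs_of_nonneg (by linarith [(hdφ01 x).2])]
      linarith [(hdφ01 x).1]
    · rw [h0 x hne, sub_zero, abs_of_nonneg (hdφ01 x).1]
      exact (hdφ01 x).2
  have hb : ∀ x, |dφ x - dstar x| < 1 / 2 := fun x =>
    lt_of_le_of_lt (le_ciSup hbdd x) hclose
  have hobs : 1 / 2 < dφ x_obs := by
    have := hb x_obs; rw [h1] at this
    have := abs_lt.mp this; linarith [this.1]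
  have hoth : ∀ x, x ≠ x_obs → dφ x < 1 / 2 := by
    intro x hne
    have := hb x; rw [h0 x hne, sub_zero] at this
    exact lt_of_le_of_lt (le_abs_self _) this
  have hinj : Set.InjOn h (Set.Icc 0 1) := by
    rcases hmono with hm | hm
    · exact hm.injOn
    · exact hm.injOn
  have hset : (fun u => h (dφ (g u))) ⁻¹' {h (dφ x_obs)} = {u : U | g u = x_obs} := by
    ext u
    simp only [Set.mem_preimage, Set.mem_singleton_iff, Set.mem_setOf_eq]
    constructor
    · intro heq
      by_contra hne
      have hlt : dφ (g u) < dφ x_obs := lt_trans (hoth _ hne) hobs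
      exact absurd (hinj (hdφ01 _) (hdφ01 _) heq) (ne_of_lt hlt)
    · intro heq; rw [heq]
  have hm : Measurable fun u => h (dφ (g u)) := hmeas.comp (hdφm.comp hg)
  rw [Measure.map_apply hm (measurableSet_singleton _), hset]
end

section
/- Let S be a measurable space, κ a Markov kernel from S to S, ν a probability measure on S, and δ ∈ (0,1] such that κ(x, A) ≥ δ·ν(A) for every x ∈ S and every measurable set A (the minorization/Doeblin condition). Then for any two probability measures μ₁, μ₂ on S, sup over measurable A of |(μ₁.bind κ)(A) − (μ₂.bind κ)(A)| ≤ (1 − δ) · sup over measurable A of |μ₁(A) − μ₂(A)|; that is, one step of the kernel contracts the total variation distance between probability measures by the factor (1 − δ). -/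
/-!
Minorization says `κ x ≥ η` for the single measure `η := δ • ν`, of mass `δ`. For a measurable
set `A` the function `x ↦ κ x A` then takes values in `[η A, 1 - η Aᶜ]`, an interval of length
`1 - δ`, and `(μ.bind κ) A = ∫ x, κ x A ∂μ`. By the layer-cake formula, the difference of the
integrals of such a function against `μ₁` and `μ₂` is an integral over `t` of
`μ₁ {f ≥ t} - μ₂ {f ≥ t}` along an interval of length `1 - δ`, and each of these differences is
at most `tvDist μ₁ μ₂`.
-/

open MeasureTheory ProbabilityTheory

/-- The total variation distance between two measures:
`dTV(μ, ν) = sup { |μ(A) - ν(A)| : A measurable }`. -/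
noncomputable def tvDist {S : Type*} [MeasurableSpace S] (μ ν : Measure S) : ℝ :=
  ⨆ A : {A : Set S // MeasurableSet A}, |(μ A).toReal - (ν A).toReal|

open Set

section

variable {S T : Type*} [MeasurableSpace S] [MeasurableSpace T]

lemma bddAbove_range_abs_measureReal_sub (μ ν : Measure S) [IsFiniteMeasure μ]
    [IsFiniteMeasure ν] :
    BddAbove (range fun A : {A : Set S // MeasurableSet A} => |μ.real A - ν.real A|) := by
  refine ⟨μ.real univ + ν.real univ, ?_⟩
  rintro _ ⟨A, rfl⟩
  exact abs_sub_le_of_nonneg_of_le measureReal_nonneg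
    (le_add_of_le_of_nonneg (measureReal_mono (subset_univ _)) measureReal_nonneg)
    measureReal_nonneg (le_add_of_nonneg_of_le measureReal_nonneg (measureReal_mono (subset_univ _)))

lemma abs_measureReal_sub_le_tvDist (μ ν : Measure S) [IsFiniteMeasure μ] [IsFiniteMeasure ν]
    {A : Set S} (hA : MeasurableSet A) : |μ.real A - ν.real A| ≤ tvDist μ ν :=
  le_ciSup (bddAbove_range_abs_measureReal_sub μ ν) ⟨A, hA⟩

lemma tvDist_nonneg (μ ν : Measure S) [IsFiniteMeasure μ] [IsFiniteMeasure ν] :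
    0 ≤ tvDist μ ν :=
  (abs_nonneg _).trans (abs_measureReal_sub_le_tvDist μ ν .empty)

lemma tvDist_comm (μ ν : Measure S) : tvDist μ ν = tvDist ν μ :=
  iSup_congr fun _ => abs_sub_comm _ _

lemma tvDist_le_of_forall_measureReal_sub_le {μ ν : Measure S} {c : ℝ}
    (h₁ : ∀ A, MeasurableSet A → μ.real A - ν.real A ≤ c)
    (h₂ : ∀ A, MeasurableSet A → ν.real A - μ.real A ≤ c) :
    tvDist μ ν ≤ c :=
  have : Nonempty {A : Set S // MeasurableSet A} := ⟨⟨∅, .empty⟩⟩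
  ciSup_le fun A => abs_sub_le_iff.2 ⟨h₁ A.1 A.2, h₂ A.1 A.2⟩

lemma integrableOn_Ioc_measureReal_setOf_le (μ : Measure S) [IsFiniteMeasure μ] (f : S → ℝ)
    (c : ℝ) : IntegrableOn (fun t => μ.real {x | t ≤ f x}) (Ioc 0 c) := by
  have hanti : Antitone fun t => μ.real {x | t ≤ f x} := fun _ _ hst =>
    measureReal_mono fun _ hx => hst.trans hx
  exact (hanti.antitoneOn _).integrableOn_isCompact isCompact_Icc |>.mono_set Ioc_subset_Icc_self

lemma integral_sub_integral_le_mul_tvDist (μ₁ μ₂ : Measure S) [IsFiniteMeasure μ₁]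
    [IsFiniteMeasure μ₂] {f : S → ℝ} {c : ℝ} (hf : Measurable f) (hc : 0 ≤ c)
    (hf_mem : ∀ x, f x ∈ Icc 0 c) :
    ∫ x, f x ∂μ₁ - ∫ x, f x ∂μ₂ ≤ c * tvDist μ₁ μ₂ := by
  have layer_cake (μ : Measure S) [IsFiniteMeasure μ] :
      ∫ x, f x ∂μ = ∫ t in Ioc 0 c, μ.real {x | t ≤ f x} :=
    (Integrable.of_mem_Icc 0 c hf.aemeasurable (.of_forall hf_mem)).integral_eq_integral_Ioc_meas_le
      (.of_forall fun x => (hf_mem x).1) (.of_forall fun x => (hf_mem x).2)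
  calc ∫ x, f x ∂μ₁ - ∫ x, f x ∂μ₂
      = ∫ t in Ioc 0 c, (μ₁.real {x | t ≤ f x} - μ₂.real {x | t ≤ f x}) := by
        rw [layer_cake, layer_cake, integral_sub (integrableOn_Ioc_measureReal_setOf_le ..)
          (integrableOn_Ioc_measureReal_setOf_le ..)]
    _ ≤ ∫ t in Ioc 0 c, tvDist μ₁ μ₂ := by
        refine setIntegral_mono_on ((integrableOn_Ioc_measureReal_setOf_le ..).sub
          (integrableOn_Ioc_measureReal_setOf_le ..)) (by simp) measurableSet_Ioc fun t _ => ?_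
        exact (le_abs_self _).trans (abs_measureReal_sub_le_tvDist _ _ (hf measurableSet_Ici))
    _ = c * tvDist μ₁ μ₂ := by simp [hc]

lemma integral_sub_integral_le_of_mem_Icc (μ₁ μ₂ : Measure S) [IsProbabilityMeasure μ₁]
    [IsProbabilityMeasure μ₂] {f : S → ℝ} {a b : ℝ} (hf : Measurable f)
    (hf_mem : ∀ x, f x ∈ Icc a b) :
    ∫ x, f x ∂μ₁ - ∫ x, f x ∂μ₂ ≤ (b - a) * tvDist μ₁ μ₂ := by
  have hint (μ : Measure S) [IsProbabilityMeasure μ] : Integrable f μ :=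
    .of_mem_Icc a b hf.aemeasurable (.of_forall hf_mem)
  obtain ⟨x₀⟩ := nonempty_of_isProbabilityMeasure μ₁
  have hab : a ≤ b := (hf_mem x₀).1.trans (hf_mem x₀).2
  have key := integral_sub_integral_le_mul_tvDist μ₁ μ₂ (f := fun x => f x - a)
    (hf.sub_const a) (sub_nonneg.2 hab)
    fun x => ⟨sub_nonneg.2 (hf_mem x).1, sub_le_sub_right (hf_mem x).2 a⟩
  simpa [integral_sub (hint μ₁) (integrable_const a), integral_sub (hint μ₂) (integrable_const a)]
    using key

lemma measureReal_bind (μ : Measure S) [IsFiniteMeasure μ] (κ : Kernel S T) [IsFiniteKernel κ]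
    {A : Set T} (hA : MeasurableSet A) : (μ.bind κ).real A = ∫ x, (κ x).real A ∂μ := by
  rw [measureReal_def, Measure.bind_apply hA κ.aemeasurable,
    ← integral_toReal (κ.measurable_coe hA).aemeasurable (.of_forall fun _ => measure_lt_top _ _)]
  rfl

lemma measureReal_bind_sub_le (κ : Kernel S T) [IsMarkovKernel κ] (η : Measure T)
    [IsFiniteMeasure η] (hη : ∀ x, η ≤ κ x) (μ₁ μ₂ : Measure S) [IsProbabilityMeasure μ₁]
    [IsProbabilityMeasure μ₂] {A : Set T} (hA : MeasurableSet A) :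
    (μ₁.bind κ).real A - (μ₂.bind κ).real A ≤ (1 - η.real univ) * tvDist μ₁ μ₂ := by
  have hle (x : S) (B : Set T) : η.real B ≤ (κ x).real B :=
    ENNReal.toReal_mono (measure_ne_top _ _) (hη x B)
  have hwidth : 1 - η.real univ = (1 - η.real Aᶜ) - η.real A := by
    rw [← measureReal_add_measureReal_compl hA]; ring
  rw [measureReal_bind μ₁ κ hA, measureReal_bind μ₂ κ hA, hwidth]
  refine integral_sub_integral_le_of_mem_Icc μ₁ μ₂ (κ.measurable_coe hA).ennreal_toReal
    fun x => ⟨hle x A, ?_⟩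
  linarith [hle x Aᶜ, measureReal_add_measureReal_compl (μ := κ x) hA, probReal_univ (μ := κ x)]

lemma tvDist_bind_le (κ : Kernel S T) [IsMarkovKernel κ] (η : Measure T) [IsFiniteMeasure η]
    (hη : ∀ x, η ≤ κ x) (μ₁ μ₂ : Measure S) [IsProbabilityMeasure μ₁]
    [IsProbabilityMeasure μ₂] :
    tvDist (μ₁.bind κ) (μ₂.bind κ) ≤ (1 - η.real univ) * tvDist μ₁ μ₂ :=
  tvDist_le_of_forall_measureReal_sub_le (fun _ hA => measureReal_bind_sub_le κ η hη μ₁ μ₂ hA)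
    fun _ hA => tvDist_comm μ₁ μ₂ ▸ measureReal_bind_sub_le κ η hη μ₂ μ₁ hA

end

theorem doeblin_tv_contraction_general
    {S : Type*} [MeasurableSpace S]
    (κ : Kernel S S) [IsMarkovKernel κ]
    (ν : Measure S) [IsProbabilityMeasure ν]
    (δ : ℝ)
    (hmin : ∀ x : S, ∀ A : Set S, MeasurableSet A → ENNReal.ofReal δ * ν A ≤ κ x A) :
    ∀ μ₁ μ₂ : Measure S, IsProbabilityMeasure μ₁ → IsProbabilityMeasure μ₂ →
      tvDist (μ₁.bind (fun x => κ x)) (μ₂.bind (fun x => κ x))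
        ≤ (1 - δ) * tvDist μ₁ μ₂ := by
  intro μ₁ μ₂ _ _
  have := ν.smul_finite (ENNReal.ofReal_ne_top (r := δ))
  have hle (x : S) : ENNReal.ofReal δ • ν ≤ κ x := Measure.le_iff.2 fun A hA => hmin x A hA
  calc tvDist (μ₁.bind κ) (μ₂.bind κ)
      ≤ (1 - (ENNReal.ofReal δ • ν).real univ) * tvDist μ₁ μ₂ := tvDist_bind_le κ _ hle μ₁ μ₂
    _ ≤ (1 - δ) * tvDist μ₁ μ₂ := by
      gcongr
      · exact tvDist_nonneg μ₁ μ₂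
      · simp [ENNReal.toReal_ofReal']

/-- **Supporting lemma for Theorem 2 (Doeblin contraction).** If a Markov kernel `κ` satisfies
the minorization condition `κ x A ≥ δ · ν A` for every state `x` and measurable set `A`, with
`δ ∈ (0,1]` and `ν` a probability measure, then one step of the kernel contracts the total
variation distance between probability measures by the factor `1 - δ`. -/
theorem doeblin_tv_contraction
    {S : Type*} [MeasurableSpace S]
    (κ : Kernel S S) [IsMarkovKernel κ]
    (ν : Measure S) [IsProbabilityMeasure ν]
    (δ : ℝ) (hδ : δ ∈ Set.Ioc (0 : ℝ) 1)
    (hmin : ∀ x : S, ∀ A : Set S, MeasurableSet A → ENNReal.ofReal δ * ν A ≤ κ x A) :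
    ∀ μ₁ μ₂ : Measure S, IsProbabilityMeasure μ₁ → IsProbabilityMeasure μ₂ →
      tvDist (μ₁.bind (fun x => κ x)) (μ₂.bind (fun x => κ x))
        ≤ (1 - δ) * tvDist μ₁ μ₂ :=
  doeblin_tv_contraction_general κ ν δ hmin
end

section
/- Let S be a measurable space, κ a Markov kernel from S to S, ν a probability measure on S, and δ ∈ (0,1] such that κ(x, A) ≥ δ·ν(A) for every x ∈ S and every measurable set A. Then there exists a unique probability measure π on S that is invariant for κ (i.e. π.bind κ = π), and for every probability measure μ on S and every n ∈ ℕ, sup over measurable A of |(μ.bind κⁿ)(A) − π(A)| ≤ (1 − δ)ⁿ, where κⁿ denotes the n-fold composition of the kernel κ with itself. -/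
/-!
Doeblin's condition splits the kernel as `κ x = ε • ν + (1 - ε) • R x` with `R` again Markov.
Hence `n + 1` steps from `μ` give `ε • νκⁿ + (1 - ε) • (μR)κⁿ`: the common part `ε • νκⁿ`
cancels between two initial laws and the rest carries the factor `1 - ε`, so by induction on
`n` the chains from any two initial laws are `(1 - ε)ⁿ`-close. Uniqueness of the invariant law
follows by letting `n → ∞`, and existence from the explicit series `π = ∑ ε (1 - ε)ⁿ νRⁿ`.
-/

open MeasureTheory ProbabilityTheory

open scoped NNReal ENNReal

section Doeblin

variable {α : Type*} [MeasurableSpace α]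

lemma iterate_comp_add_smul (κ : Kernel α α) (n : ℕ) (a b : ℝ≥0) (μ μ' : Measure α) :
    (κ ∘ₘ ·)^[n] (a • μ + b • μ') = a • (κ ∘ₘ ·)^[n] μ + b • (κ ∘ₘ ·)^[n] μ' := by
  induction n with
  | zero => rfl
  | succ n ih =>
    simp only [Function.iterate_succ_apply', ih, Measure.comp_add, Measure.bind_smul]

lemma isProbabilityMeasure_iterate_comp (κ : Kernel α α) [IsMarkovKernel κ] (μ : Measure α)
    [IsProbabilityMeasure μ] (n : ℕ) : IsProbabilityMeasure ((κ ∘ₘ ·)^[n] μ) := by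
  induction n with
  | zero => assumption
  | succ n ih => rw [Function.iterate_succ_apply']; infer_instance

/-- For `ε = 1` the factor `(1 - ε)⁻¹` is the junk value `0`, and this kernel is `0`. -/
noncomputable def ProbabilityTheory.Kernel.residual (κ : Kernel α α) (ν : Measure α)
    [IsFiniteMeasure ν] (ε : ℝ≥0) (hle : ∀ x, ε • ν ≤ κ x) : Kernel α α where
  toFun x := (1 - ε)⁻¹ • (κ x - ε • ν)
  measurable' := by
    refine Measure.measurable_of_measurable_coe _ fun A hA => ?_
    simp only [Measure.coe_nnreal_smul_apply, Measure.sub_apply hA (hle _)]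
    exact ((κ.measurable_coe hA).sub measurable_const).const_mul _

lemma exists_markov_split_of_minorization (κ : Kernel α α) [IsMarkovKernel κ] (ν : Measure α)
    [IsProbabilityMeasure ν] {ε : ℝ≥0} (hε : ε ≤ 1) (hle : ∀ x, ε • ν ≤ κ x) :
    ∃ R : Kernel α α, IsMarkovKernel R ∧ ∀ x, κ x = ε • ν + (1 - ε) • R x := by
  rcases hε.eq_or_lt with rfl | hε
  · refine ⟨κ, inferInstance, fun x => ?_⟩
    simpa using (Measure.eq_of_le_of_isProbabilityMeasure (by simpa using hle x)).symm
  have hε' : 1 - ε ≠ 0 := (tsub_pos_of_lt hε).ne'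
  refine ⟨κ.residual ν ε hle, ⟨fun x => ⟨?_⟩⟩, fun x => ?_⟩
  · show ((1 - ε)⁻¹ • (κ x - ε • ν)) Set.univ = 1
    rw [Measure.coe_nnreal_smul_apply, Measure.sub_apply .univ (hle x),
      Measure.coe_nnreal_smul_apply, measure_univ, measure_univ, mul_one, ← ENNReal.coe_one,
      ← ENNReal.coe_sub, ← ENNReal.coe_mul, inv_mul_cancel₀ hε', ENNReal.coe_one]
  · show κ x = ε • ν + (1 - ε) • (1 - ε)⁻¹ • (κ x - ε • ν)
    rw [smul_smul, mul_inv_cancel₀ hε', one_smul, add_comm, Measure.sub_add_cancel_of_le (hle x)]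

variable {κ R : Kernel α α} {ν : Measure α} {ε : ℝ≥0}

lemma comp_eq_smul_add_smul_comp (hdec : ∀ x, κ x = ε • ν + (1 - ε) • R x) (μ : Measure α)
    [IsProbabilityMeasure μ] : κ ∘ₘ μ = ε • ν + (1 - ε) • (R ∘ₘ μ) := by
  ext A hA
  simp only [Measure.bind_apply hA (Kernel.aemeasurable _), hdec, Measure.add_apply,
    Measure.coe_nnreal_smul_apply]
  rw [lintegral_add_left measurable_const, lintegral_const, measure_univ, mul_one,
    lintegral_const_mul _ (R.measurable_coe hA)]

lemma abs_measureReal_iterate_comp_sub_le [IsMarkovKernel κ] [IsMarkovKernel R]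
    [IsProbabilityMeasure ν] (hε : ε ≤ 1) (hdec : ∀ x, κ x = ε • ν + (1 - ε) • R x) (n : ℕ)
    (μ μ' : Measure α) [IsProbabilityMeasure μ] [IsProbabilityMeasure μ'] (A : Set α) :
    |((κ ∘ₘ ·)^[n] μ).real A - ((κ ∘ₘ ·)^[n] μ').real A| ≤ (1 - ε : ℝ) ^ n := by
  induction n generalizing μ μ' with
  | zero =>
    rw [pow_zero, Function.iterate_zero_apply, Function.iterate_zero_apply]
    exact abs_sub_le_of_nonneg_of_le measureReal_nonneg measureReal_le_one measureReal_nonneg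
      measureReal_le_one
  | succ n ih =>
    have := isProbabilityMeasure_iterate_comp κ ν n
    have hstep : ∀ (ρ : Measure α) [IsProbabilityMeasure ρ],
        ((κ ∘ₘ ·)^[n + 1] ρ).real A
          = ε * ((κ ∘ₘ ·)^[n] ν).real A + (1 - ε : ℝ) * ((κ ∘ₘ ·)^[n] (R ∘ₘ ρ)).real A := by
      intro ρ _
      have := isProbabilityMeasure_iterate_comp κ (R ∘ₘ ρ) n
      rw [Function.iterate_succ_apply, comp_eq_smul_add_smul_comp hdec, iterate_comp_add_smul,
        measureReal_add_apply, measureReal_nnreal_smul_apply, measureReal_nnreal_smul_apply,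
        NNReal.coe_sub hε, NNReal.coe_one]
    rw [hstep, hstep, add_sub_add_left_eq_sub, ← mul_sub, abs_mul, pow_succ',
      abs_of_nonneg (sub_nonneg.2 (by exact_mod_cast hε))]
    exact mul_le_mul_of_nonneg_left (ih _ _) (sub_nonneg.2 (by exact_mod_cast hε))

/-- The law of the chain that regenerates from `ν` with probability `ε` and otherwise moves
by `R`, observed at stationarity: the last regeneration lies a `Geometric(ε)` number of steps
back. -/
noncomputable def doeblinMeasure (R : Kernel α α) (ν : Measure α) (ε : ℝ≥0) : Measure α :=
  Measure.sum fun n => (ε * (1 - ε) ^ n) • (R ∘ₘ ·)^[n] ν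

lemma isProbabilityMeasure_doeblinMeasure [IsMarkovKernel R] [IsProbabilityMeasure ν]
    (hε₀ : 0 < ε) (hε₁ : ε ≤ 1) : IsProbabilityMeasure (doeblinMeasure R ν ε) := by
  have := isProbabilityMeasure_iterate_comp R ν
  constructor
  simp only [doeblinMeasure, Measure.sum_apply _ MeasurableSet.univ,
    Measure.coe_nnreal_smul_apply, measure_univ, mul_one, ENNReal.coe_mul, ENNReal.coe_pow]
  rw [ENNReal.tsum_mul_left, ENNReal.tsum_geometric, ENNReal.coe_sub, ENNReal.coe_one,
    ENNReal.sub_sub_cancel ENNReal.one_ne_top (by exact_mod_cast hε₁),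
    ENNReal.mul_inv_cancel (by exact_mod_cast hε₀.ne') ENNReal.coe_ne_top]

lemma comp_doeblinMeasure [IsProbabilityMeasure (doeblinMeasure R ν ε)]
    (hdec : ∀ x, κ x = ε • ν + (1 - ε) • R x) :
    κ ∘ₘ doeblinMeasure R ν ε = doeblinMeasure R ν ε := by
  rw [comp_eq_smul_add_smul_comp hdec]
  ext A hA
  simp only [doeblinMeasure, Measure.add_apply, Measure.coe_nnreal_smul_apply,
    Measure.bind_sum _ _ R.aemeasurable, Measure.bind_smul, Measure.sum_apply _ hA]
  rw [tsum_eq_zero_add' (f := fun n => _ * ((R ∘ₘ ·)^[n] ν) A) ENNReal.summable,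
    ← ENNReal.tsum_mul_left]
  congr 1
  · simp
  · refine tsum_congr fun n => ?_
    rw [Function.iterate_succ_apply']
    push_cast
    ring

lemma MeasureTheory.Measure.eq_of_forall_abs_measureReal_sub_le_pow {μ μ' : Measure α}
    [IsFiniteMeasure μ] [IsFiniteMeasure μ'] {r : ℝ} (hr₀ : 0 ≤ r) (hr₁ : r < 1)
    (h : ∀ n : ℕ, ∀ A, MeasurableSet A → |μ.real A - μ'.real A| ≤ r ^ n) : μ = μ' := by
  ext A hA
  rw [← measureReal_eq_measureReal_iff, ← sub_eq_zero, ← abs_nonpos_iff]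
  exact ge_of_tendsto' (tendsto_pow_atTop_nhds_zero_of_lt_one hr₀ hr₁) fun n => h n A hA

lemma tvDist_le_of_forall {μ μ' : Measure α} {c : ℝ}
    (h : ∀ A, MeasurableSet A → |μ.real A - μ'.real A| ≤ c) : tvDist μ μ' ≤ c :=
  have : Nonempty {A : Set α // MeasurableSet A} := ⟨⟨∅, .empty⟩⟩
  ciSup_le fun A => h A.1 A.2

end Doeblin

/-- **Supporting lemma for Theorem 2.** A Markov kernel `κ` satisfying a Doeblin minorization
condition `κ x A ≥ δ · ν A` (for all states `x` and measurable `A`, with `δ ∈ (0,1]` and `ν` a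
probability measure) has a unique invariant probability measure `π`, and the distribution of
the chain converges to `π` geometrically and uniformly in the initial distribution:
`dTV(μ κⁿ, π) ≤ (1 - δ)ⁿ` for every probability measure `μ` and every `n`. -/
theorem doeblin_unique_stationary_geometric_convergence
    {S : Type*} [MeasurableSpace S]
    (κ : Kernel S S) [IsMarkovKernel κ]
    (ν : Measure S) [IsProbabilityMeasure ν]
    (δ : ℝ) (hδ : δ ∈ Set.Ioc (0 : ℝ) 1)
    (hmin : ∀ x : S, ∀ A : Set S, MeasurableSet A → ENNReal.ofReal δ * ν A ≤ κ x A) :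
    ∃ π : Measure S, IsProbabilityMeasure π ∧ π.bind (fun x => κ x) = π ∧
      (∀ π' : Measure S, IsProbabilityMeasure π' → π'.bind (fun x => κ x) = π' → π' = π) ∧
      (∀ μ : Measure S, IsProbabilityMeasure μ → ∀ n : ℕ,
        tvDist ((fun m : Measure S => m.bind (fun x => κ x))^[n] μ) π ≤ (1 - δ) ^ n) := by
  eta_reduce
  obtain ⟨hδ₀, hδ₁⟩ := hδ
  set ε := δ.toNNReal
  have hε₁ : ε ≤ 1 := Real.toNNReal_le_one.2 hδ₁
  have hεδ : (ε : ℝ) = δ := Real.coe_toNNReal δ hδ₀.le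
  obtain ⟨R, hR, hdec⟩ :=
    exists_markov_split_of_minorization κ ν hε₁ fun x => Measure.le_iff.2 (hmin x)
  set π := doeblinMeasure R ν ε
  have hπ₁ : IsProbabilityMeasure π :=
    isProbabilityMeasure_doeblinMeasure (Real.toNNReal_pos.2 hδ₀) hε₁
  have hπ : κ ∘ₘ π = π := comp_doeblinMeasure hdec
  have hcontract := abs_measureReal_iterate_comp_sub_le hε₁ hdec
  rw [hεδ] at hcontract
  refine ⟨π, hπ₁, hπ, fun π' _ hπ' => ?_, fun μ _ n => ?_⟩
  · refine Measure.eq_of_forall_abs_measureReal_sub_le_pow (sub_nonneg.2 hδ₁) (by linarith)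
      fun n A _ => ?_
    simpa only [Function.iterate_fixed (f := (κ ∘ₘ ·)) hπ',
      Function.iterate_fixed (f := (κ ∘ₘ ·)) hπ] using hcontract n π' π A
  · refine tvDist_le_of_forall fun A _ => ?_
    simpa only [Function.iterate_fixed (f := (κ ∘ₘ ·)) hπ] using hcontract n μ π A
end
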